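/- At each of the two points (π, arccos((1+√6)/5), (1/2)·arccos(1/(1−√6))) and (0, arccos((1+√6)/5), π − (1/2)·arccos(1/(1−√6))), the gradient of L₁ vanishes, L₁ takes the value (3/50)·(9−√6), and the Hessian matrix of L₁ has both a strictly positive and a strictly negative eigenvalue; hence these points are saddle points of L₁. -/

import Mathlib

/-
Expanding the half angle and the squares, `L₁` is the trigonometric polynomial
`5/16 - cos 2β₁/16 - cos 2β₂/16 - 3 cos 2β₁ cos 2β₂/16 - cos Ω sin β₁ sin 2β₂/4
  + cos Ω sin 2β₁ sin 2β₂/8`,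
a sum of products of one-variable functions. Every partial derivative of such a sum is again
such a sum, so the gradient and the Hessian are read off from the derivatives of the factors.
At the two points `cos Ω = ±1`, `cos β₁ = c` with `5c² = 2c + 1`, and `2β₂ ≡ π ± β₁`, which
makes the gradient vanish. The Hessian is block diagonal: its `Ω`-entry is negative, and its
`(β₁, β₂)`-block has negative determinant, hence a positive eigenvalue.
-/

open Matrix

/-- The kinematic landscape function `L₁(Ω,β₁,β₂)`. -/
noncomputable def L1 (Ω β₁ β₂ : ℝ) : ℝ :=
  (1/8) * Real.sin β₂ ^ 2 * (3 + Real.cos (2*β₁))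
  + (1/2) * Real.sin β₁ ^ 2 * Real.cos β₂ ^ 2
  - (1/2) * Real.cos Ω * Real.sin β₁ * Real.sin (β₁/2) ^ 2 * Real.sin (2*β₂)

/-- `L₁` as a function on `ℝ³`. -/
noncomputable def L1v (v : Fin 3 → ℝ) : ℝ := L1 (v 0) (v 1) (v 2)

/-- Hessian matrix of second partial derivatives of `f : ℝⁿ → ℝ` at `p`. -/
noncomputable def hessian {n : ℕ} (f : (Fin n → ℝ) → ℝ) (p : Fin n → ℝ) :
    Matrix (Fin n) (Fin n) ℝ :=
  Matrix.of fun i j => fderiv ℝ (fun y => fderiv ℝ f y (Pi.single j 1)) p (Pi.single i 1)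

open Real

noncomputable section

/-- The `m`-th derivative of `x ↦ cos (a * x + θ)`. -/
def cosWave (a θ : ℝ) (m : ℕ) (x : ℝ) : ℝ := a ^ m * cos (a * x + θ + m * (π / 2))

theorem hasDerivAt_cosWave (a θ : ℝ) (m : ℕ) (x : ℝ) :
    HasDerivAt (cosWave a θ m) (cosWave a θ (m + 1) x) x := by
  have h : HasDerivAt (fun y => a ^ m * cos (a * y + θ + m * (π / 2)))
      (a ^ m * (-sin (a * x + θ + m * (π / 2)) * a)) x := by
    simpa using ((((hasDerivAt_id x).const_mul a).add_const θ).add_const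
      (m * (π / 2))).cos.const_mul (a ^ m)
  refine h.congr_deriv ?_
  rw [cosWave, Nat.cast_succ, add_mul, one_mul, ← add_assoc, cos_add_pi_div_two]
  ring

theorem cosWave_zero (a θ x : ℝ) : cosWave a θ 0 x = cos (a * x + θ) := by
  simp [cosWave]

theorem cosWave_one (a θ x : ℝ) : cosWave a θ 1 x = -(a * sin (a * x + θ)) := by
  simp [cosWave, cos_add_pi_div_two]

theorem cosWave_two (a θ x : ℝ) : cosWave a θ 2 x = -(a ^ 2 * cos (a * x + θ)) := by
  simp [cosWave, show (2 : ℝ) * (π / 2) = π by ring, cos_add_pi]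

/-- `∂^α (v ↦ ∑ t, c t * ∏ k, φ t k 0 (v k))`, when `φ t k m` is the `m`-th derivative of
`φ t k 0`. -/
def separableSum {ι κ : Type*} [Fintype ι] [Fintype κ] (c : ι → ℝ) (φ : ι → κ → ℕ → ℝ → ℝ)
    (α : κ → ℕ) (v : κ → ℝ) : ℝ :=
  ∑ t, c t * ∏ k, φ t k (α k) (v k)

section Partial

variable {𝕜 κ F : Type*} [NontriviallyNormedField 𝕜] [Fintype κ] [DecidableEq κ]
  [NormedAddCommGroup F] [NormedSpace 𝕜 F]

theorem fderiv_apply_single_eq_deriv_update {f : (κ → 𝕜) → F} {y : κ → 𝕜}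
    (hf : DifferentiableAt 𝕜 f y) (j : κ) :
    fderiv 𝕜 f y (Pi.single j 1) = deriv (fun s => f (Function.update y j s)) (y j) := by
  have hf' : HasFDerivAt f (fderiv 𝕜 f y) (Function.update y j (y j)) := by
    rw [Function.update_eq_self]
    exact hf.hasFDerivAt
  exact (hf'.comp_hasDerivAt (y j) (hasDerivAt_update y j (y j))).deriv.symm

theorem ContinuousLinearMap.eq_zero_of_apply_single {L : (κ → 𝕜) →L[𝕜] F}
    (h : ∀ j, L (Pi.single j 1) = 0) : L = 0 := by
  refine ContinuousLinearMap.coe_injective (LinearMap.pi_ext fun j x => ?_)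
  have hx : Pi.single j x = x • (Pi.single j 1 : κ → 𝕜) := by
    rw [← Pi.single_smul, smul_eq_mul, mul_one]
  simp [hx, h]

end Partial

section SeparableSum

variable {ι κ : Type*} [Fintype ι] [Fintype κ] {c : ι → ℝ} {φ : ι → κ → ℕ → ℝ → ℝ}
  (hφ : ∀ t k m x, HasDerivAt (φ t k m) (φ t k (m + 1) x) x)
include hφ

theorem differentiable_separableSum (α : κ → ℕ) : Differentiable ℝ (separableSum c φ α) := by
  have hd : ∀ t k m, Differentiable ℝ (φ t k m) := fun t k m x => (hφ t k m x).differentiableAt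
  unfold separableSum
  fun_prop

variable [DecidableEq κ]

theorem hasDerivAt_separableSum_update (α : κ → ℕ) (y : κ → ℝ) (j : κ) :
    HasDerivAt (fun s => separableSum c φ α (Function.update y j s))
      (separableSum c φ (α + Pi.single j 1) y) (y j) := by
  unfold separableSum
  refine HasDerivAt.fun_sum fun t _ => ?_
  set P := ∏ k ∈ Finset.univ.erase j, φ t k (α k) (y k)
  have hsplit : ∀ (β : κ → ℕ) (z : κ → ℝ), (∀ k ≠ j, β k = α k ∧ z k = y k) →
      ∏ k, φ t k (β k) (z k) = φ t j (β j) (z j) * P := fun β z hz => by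
    rw [← Finset.mul_prod_erase Finset.univ _ (Finset.mem_univ j)]
    congr 1
    refine Finset.prod_congr rfl fun k hk => ?_
    rw [(hz k (Finset.ne_of_mem_erase hk)).1, (hz k (Finset.ne_of_mem_erase hk)).2]
  have hline : (fun s => c t * ∏ k, φ t k (α k) (Function.update y j s k)) =
      fun s => c t * (φ t j (α j) s * P) :=
    funext fun s => by rw [hsplit α _ (fun k hk => by simp [hk]), Function.update_self]
  rw [hline, hsplit (α + Pi.single j 1) y (fun k hk => by simp [hk])]
  simpa [mul_assoc] using ((hφ t j (α j) (y j)).mul_const P).const_mul (c t)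

theorem fderiv_separableSum_apply_single (α : κ → ℕ) (y : κ → ℝ) (j : κ) :
    fderiv ℝ (separableSum c φ α) y (Pi.single j 1) = separableSum c φ (α + Pi.single j 1) y := by
  rw [fderiv_apply_single_eq_deriv_update (differentiable_separableSum hφ α y),
    (hasDerivAt_separableSum_update hφ α y j).deriv]

end SeparableSum

theorem hessian_separableSum {ι : Type*} [Fintype ι] {n : ℕ} {c : ι → ℝ}
    {φ : ι → Fin n → ℕ → ℝ → ℝ} (hφ : ∀ t k m x, HasDerivAt (φ t k m) (φ t k (m + 1) x) x)
    (α : Fin n → ℕ) (p : Fin n → ℝ) (i j : Fin n) :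
    hessian (separableSum c φ α) p i j =
      separableSum c φ (α + Pi.single j 1 + Pi.single i 1) p := by
  have hpartial : (fun y => fderiv ℝ (separableSum c φ α) y (Pi.single j 1)) =
      separableSum c φ (α + Pi.single j 1) :=
    funext (fderiv_separableSum_apply_single hφ α · j)
  rw [hessian, Matrix.of_apply, hpartial, fderiv_separableSum_apply_single hφ]

section Eigen

variable {h a b d : ℝ}

theorem exists_neg_eigenvalue_of_corner_neg (hh : h < 0) :
    ∃ (μ : ℝ) (v : Fin 3 → ℝ), μ < 0 ∧ v ≠ 0 ∧ !![h, 0, 0; 0, a, b; 0, b, d] *ᵥ v = μ • v := by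
  refine ⟨h, ![1, 0, 0], hh, fun hv => by simpa using congrFun hv 0, ?_⟩
  ext i
  fin_cases i <;> simp [Matrix.mulVec, dotProduct, Fin.sum_univ_three]

theorem exists_pos_eigenvalue_of_det_neg (hb : b ≠ 0) (hdet : a * d - b ^ 2 < 0) :
    ∃ (μ : ℝ) (v : Fin 3 → ℝ), 0 < μ ∧ v ≠ 0 ∧ !![h, 0, 0; 0, a, b; 0, b, d] *ᵥ v = μ • v := by
  set R := √((a + d) ^ 2 - 4 * (a * d - b ^ 2))
  have hR : R ^ 2 = (a + d) ^ 2 - 4 * (a * d - b ^ 2) := sq_sqrt (by nlinarith)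
  have hR_gt : |a + d| < R := by
    rw [lt_sqrt (abs_nonneg _), sq_abs]
    linarith
  -- `μ` is the larger root of the characteristic polynomial of the `(a, b; b, d)` block.
  refine ⟨(a + d + R) / 2, ![0, b, (a + d + R) / 2 - a], by linarith [neg_abs_le (a + d)],
    fun hv => hb (by simpa using congrFun hv 1), ?_⟩
  ext i
  fin_cases i
  · simp [Matrix.mulVec, dotProduct, Fin.sum_univ_three]
  · simp [Matrix.mulVec, dotProduct, Fin.sum_univ_three]
    ring
  · simp [Matrix.mulVec, dotProduct, Fin.sum_univ_three]
    linear_combination (-1 / 4) * hR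

end Eigen

/- Term `t` of the expansion of `L₁` is `L1coeff t * ∏ k, cos (L1freq t k * v k + L1phase t k)`,
with `sin w` written as `cos (w - π/2)`. -/
def L1freq : Fin 6 → Fin 3 → ℝ :=
  ![![0, 0, 0], ![0, 2, 0], ![0, 0, 2], ![0, 2, 2], ![1, 1, 2], ![1, 2, 2]]

def L1phase : Fin 6 → Fin 3 → ℝ :=
  ![0, 0, 0, 0, ![0, -(π / 2), -(π / 2)], ![0, -(π / 2), -(π / 2)]]

def L1coeff : Fin 6 → ℝ := ![5 / 16, -1 / 16, -1 / 16, -3 / 16, -1 / 4, 1 / 8]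

def L1wave (t : Fin 6) (k : Fin 3) : ℕ → ℝ → ℝ := cosWave (L1freq t k) (L1phase t k)

theorem hasDerivAt_L1wave (t : Fin 6) (k : Fin 3) (m : ℕ) (x : ℝ) :
    HasDerivAt (L1wave t k m) (L1wave t k (m + 1) x) x :=
  hasDerivAt_cosWave _ _ m x

theorem L1v_eq_separableSum : L1v = separableSum L1coeff L1wave 0 := by
  funext v
  have hhalf : sin (v 1 / 2) ^ 2 = (1 - cos (v 1)) / 2 := by
    rw [sin_sq, cos_sq, show 2 * (v 1 / 2) = v 1 by ring]
    ring
  simp only [L1v, L1, separableSum, Fin.sum_univ_succ, Fin.prod_univ_three, L1coeff, L1wave,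
    L1freq, L1phase]
  simp [cosWave_zero, ← sub_eq_add_neg, cos_sub_pi_div_two, hhalf, cos_two_mul, sin_two_mul, sin_sq]
  ring

section CriticalPoint

variable {p : Fin 3 → ℝ} {e c : ℝ} (he : e ^ 2 = 1) (hc : 5 * c ^ 2 = 2 * c + 1)
  (h0 : cos (p 0) = e) (h1 : cos (p 1) = c) (h2c : cos (2 * p 2) = -c)
  (h2s : sin (2 * p 2) = -(e * sin (p 1)))
include he hc h0 h1 h2c h2s

theorem fderiv_L1v_eq_zero : fderiv ℝ L1v p = 0 := by
  have h0s : sin (p 0) = 0 := pow_eq_zero_iff two_ne_zero |>.mp (by rw [sin_sq, h0, he]; ring)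
  have hs : sin (p 1) ^ 2 = 1 - c ^ 2 := by rw [← h1, sin_sq]
  have h1c : cos (2 * p 1) = 2 * c ^ 2 - 1 := by rw [cos_two_mul, h1]
  have h1s : sin (2 * p 1) = 2 * sin (p 1) * c := by rw [sin_two_mul, h1]
  refine ContinuousLinearMap.eq_zero_of_apply_single fun j => ?_
  rw [L1v_eq_separableSum, fderiv_separableSum_apply_single hasDerivAt_L1wave, zero_add]
  fin_cases j <;> simp [separableSum, Fin.sum_univ_succ, Fin.prod_univ_three, L1coeff, L1wave,
    L1freq, L1phase, cosWave_zero, cosWave_one, Pi.single_apply, ← sub_eq_add_neg,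
    cos_sub_pi_div_two, sin_sub_pi_div_two, h0, h0s, h1, h1c, h1s, h2c, h2s]
  · linear_combination (sin (p 1) * (1 - 2 * c ^ 2 + c) / 4) * he - (sin (p 1) / 4) * hc
  · linear_combination (-(e * sin (p 1)) / 4) * hc

theorem L1v_eq : L1v p = 3 * (2 - c) / 10 := by
  have hs : sin (p 1) ^ 2 = 1 - c ^ 2 := by rw [← h1, sin_sq]
  have h1c : cos (2 * p 1) = 2 * c ^ 2 - 1 := by rw [cos_two_mul, h1]
  have h1s : sin (2 * p 1) = 2 * sin (p 1) * c := by rw [sin_two_mul, h1]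
  simp [L1v_eq_separableSum, separableSum, Fin.sum_univ_succ, Fin.prod_univ_three, L1coeff,
    L1wave, L1freq, L1phase, cosWave_zero, ← sub_eq_add_neg, cos_sub_pi_div_two, h0, h1c, h1s,
    h2c, h2s]
  linear_combination ((1 - c) / 4 * sin (p 1) ^ 2) * he + ((1 - c) / 4) * hs
    + ((5 * c - 1) / 40) * hc

theorem hessian_L1v_eq : hessian L1v p =
    !![-((1 - c ^ 2) * (1 - c)) / 4, 0, 0;
      0, (23 * c - 11) / 20, e * (13 * c - 1) / 10;
      0, e * (13 * c - 1) / 10, c - 1] := by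
  have h0s : sin (p 0) = 0 := pow_eq_zero_iff two_ne_zero |>.mp (by rw [sin_sq, h0, he]; ring)
  have hs : sin (p 1) ^ 2 = 1 - c ^ 2 := by rw [← h1, sin_sq]
  have h1c : cos (2 * p 1) = 2 * c ^ 2 - 1 := by rw [cos_two_mul, h1]
  have h1s : sin (2 * p 1) = 2 * sin (p 1) * c := by rw [sin_two_mul, h1]
  ext i j
  rw [L1v_eq_separableSum, hessian_separableSum hasDerivAt_L1wave]
  fin_cases i <;> fin_cases j <;> simp [separableSum, Fin.sum_univ_succ, Fin.prod_univ_three,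
    L1coeff, L1wave, L1freq, L1phase, cosWave_zero, cosWave_one, cosWave_two, Pi.single_apply,
    ← sub_eq_add_neg, cos_sub_pi_div_two, sin_sub_pi_div_two, h0, h0s, h1, h1c, h1s, h2c, h2s]
  · linear_combination ((c - 1) / 4 * sin (p 1) ^ 2) * he + ((c - 1) / 4) * hs
  · linear_combination ((c - 1 / 4) * sin (p 1) ^ 2) * he + (c - 1 / 4) * hs
      - ((10 * c + 1) / 20) * hc
  · linear_combination (3 / 2 * e * c) * hs - (e * (5 * c + 1) / 10) * hc
  · linear_combination (3 / 2 * e * c) * hs - (e * (5 * c + 1) / 10) * hc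
  · linear_combination ((c - 1) * sin (p 1) ^ 2) * he + (c - 1) * hs - (c / 2) * hc

theorem hessian_L1v_saddle (hc_pos : 0 < c) :
    (∃ (μ : ℝ) (v : Fin 3 → ℝ), 0 < μ ∧ v ≠ 0 ∧ hessian L1v p *ᵥ v = μ • v) ∧
      (∃ (μ : ℝ) (v : Fin 3 → ℝ), μ < 0 ∧ v ≠ 0 ∧ hessian L1v p *ᵥ v = μ • v) := by
  rw [hessian_L1v_eq he hc h0 h1 h2c h2s]
  have hc_gt : 11 / 23 < c := by nlinarith
  have hc_lt : c < 1 := by nlinarith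
  have he0 : e ≠ 0 := by rintro rfl; norm_num at he
  refine ⟨exists_pos_eigenvalue_of_det_neg ?_ ?_, exists_neg_eigenvalue_of_corner_neg ?_⟩
  · exact div_ne_zero (mul_ne_zero he0 (by linarith)) (by norm_num)
  · rw [div_pow, mul_pow, he]
    nlinarith
  · have : 0 < (1 - c ^ 2) * (1 - c) := mul_pos (by nlinarith) (by linarith)
    linarith

end CriticalPoint

theorem arccos_one_div_one_sub_sqrt_six :
    arccos (1 / (1 - √6)) = π - arccos ((1 + √6) / 5) := by
  have h6 : √6 ^ 2 = 6 := sq_sqrt (by norm_num)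
  have hne : 1 - √6 ≠ 0 := by nlinarith [sqrt_nonneg 6]
  rw [show 1 / (1 - √6) = -((1 + √6) / 5) by field_simp; linear_combination -h6, arccos_neg]

end

open Real in
theorem stmt8 (p : Fin 3 → ℝ)
    (hp : p = ![π, arccos ((1 + Real.sqrt 6)/5), (1/2) * arccos (1/(1 - Real.sqrt 6))]
      ∨ p = ![0, arccos ((1 + Real.sqrt 6)/5), π - (1/2) * arccos (1/(1 - Real.sqrt 6))]) :
    -- the gradient of L₁ vanishes at p
    fderiv ℝ L1v p = 0
    -- L₁ takes the value (3/50) * (9 - Real.sqrt 6) at p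
    ∧ L1v p = (3/50) * (9 - Real.sqrt 6)
    -- the Hessian has a strictly positive eigenvalue
    ∧ (∃ (c : ℝ) (v : Fin 3 → ℝ), 0 < c ∧ v ≠ 0 ∧ (hessian L1v p).mulVec v = c • v)
    -- and a strictly negative eigenvalue (hence p is a saddle point)
    ∧ (∃ (c : ℝ) (v : Fin 3 → ℝ), c < 0 ∧ v ≠ 0 ∧ (hessian L1v p).mulVec v = c • v) := by
  rw [arccos_one_div_one_sub_sqrt_six] at hp
  set c := (1 + √6) / 5
  have h6 : √6 ^ 2 = 6 := sq_sqrt (by norm_num)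
  have hc : 5 * c ^ 2 = 2 * c + 1 := by linear_combination (1 / 5) * h6
  have hc_pos : 0 < c := by positivity
  have hcos : cos (arccos c) = c := cos_arccos (by linarith) (by nlinarith)
  have h1 : cos (p 1) = c := by rcases hp with rfl | rfl <;> exact hcos
  obtain ⟨e, he, h0, h2c, h2s⟩ : ∃ e : ℝ, e ^ 2 = 1 ∧ cos (p 0) = e ∧ cos (2 * p 2) = -c ∧
      sin (2 * p 2) = -(e * sin (p 1)) := by
    rcases hp with rfl | rfl
    · refine ⟨-1, by norm_num, by simp, ?_, ?_⟩ <;> simp [cos_pi_sub, hcos, sin_pi_sub]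
    · refine ⟨1, by norm_num, by simp, ?_, ?_⟩ <;>
        simp [mul_sub, cos_two_pi_sub, sin_two_pi_sub, cos_pi_sub, sin_pi_sub, hcos]
  refine ⟨fderiv_L1v_eq_zero he hc h0 h1 h2c h2s, ?_, hessian_L1v_saddle he hc h0 h1 h2c h2s hc_pos⟩
  rw [L1v_eq he hc h0 h1 h2c h2s]
  ring
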